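/- arXiv:2306.15986 — 7 statements merged into one kernel-verified Lean document; each statement's English description precedes it below -/
import Mathlib

section
/- A graph G with p vertices and q edges (q ≥ 1) is super edge-magic if and only if there exists a bijection f : V(G) → {1, 2, ..., p} such that the set S = {f(u) + f(v) : uv ∈ E(G)} consists of q consecutive integers. Moreover, in that case f extends to a super edge-magic labeling of G whose valence is k = p + q + s, where s = min(S). -/
/-- `f` is an edge-magic labeling of the graph `G` with valence `k`:
`f` is a bijection from `V(G) ∪ E(G)` onto `{1, …, p + q}` and
`f u + f v + f uv = k` for every edge `uv`. -/
def IsEdgeMagic {V : Type*} [Fintype V] (G : SimpleGraph V)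
    (f : V ⊕ G.edgeSet → ℕ) (k : ℕ) : Prop :=
  Set.BijOn f Set.univ (Set.Icc 1 (Fintype.card V + G.edgeSet.ncard)) ∧
  ∀ u v, ∀ h : G.Adj u v,
    f (Sum.inl u) + f (Sum.inl v) + f (Sum.inr ⟨s(u, v), G.mem_edgeSet.mpr h⟩) = k

/-- `f` is a super edge-magic labeling of `G` with valence `k`: an edge-magic
labeling whose vertex labels are exactly `{1, …, p}`. -/
def IsSuperEdgeMagic {V : Type*} [Fintype V] (G : SimpleGraph V)
    (f : V ⊕ G.edgeSet → ℕ) (k : ℕ) : Prop :=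
  IsEdgeMagic G f k ∧ ∀ v, f (Sum.inl v) ∈ Set.Icc 1 (Fintype.card V)

lemma edge_decomp {V : Type*} (G : SimpleGraph V) (e : G.edgeSet) :
    ∃ u v, G.Adj u v ∧ e.1 = s(u,v) := by
  obtain ⟨e, he⟩ := e
  induction e using Sym2.ind with
  | _ u v => exact ⟨u, v, he, rfl⟩

lemma ncard_Icc' (a b : ℕ) : (Set.Icc a b).ncard = b + 1 - a := by
  rw [← Finset.coe_Icc, Set.ncard_coe_finset, Nat.card_Icc]

lemma construct {V : Type*} [Fintype V] (G : SimpleGraph V) (p q : ℕ)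
    (hp : Fintype.card V = p) (hq : G.edgeSet.ncard = q) (hq1 : 1 ≤ q)
    (fv : V → ℕ) (hfv : Set.BijOn fv Set.univ (Set.Icc 1 p)) (s : ℕ)
    (hS : {m | ∃ u v, G.Adj u v ∧ m = fv u + fv v} = Set.Icc s (s + q - 1)) :
    ∃ F : V ⊕ G.edgeSet → ℕ, (∀ v, F (Sum.inl v) = fv v) ∧
      IsSuperEdgeMagic G F (p + q + s) := by
  classical
  set g : Sym2 V → ℕ := Sym2.lift ⟨fun u v => fv u + fv v, fun u v => add_comm _ _⟩ with hgdef
  have hgm : ∀ u v, g s(u, v) = fv u + fv v := fun u v => rfl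
  refine ⟨Sum.elim fv (fun e => p + q + s - g e.1), fun v => rfl, ?_⟩
  have hvm : ∀ v : V, fv v ∈ Set.Icc 1 p := fun v => hfv.mapsTo (Set.mem_univ v)
  have hem : ∀ a ∈ G.edgeSet, s ≤ g a ∧ g a ≤ s + q - 1 := by
    intro a ha
    obtain ⟨u, v, huv, he⟩ := edge_decomp G ⟨a, ha⟩
    have : g a ∈ Set.Icc s (s + q - 1) := by
      rw [← hS]; exact ⟨u, v, huv, by rw [show a = s(u,v) from he, hgm]⟩
    exact ⟨this.1, this.2⟩
  -- injectivity of g on the edge set, by counting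
  have hefin : G.edgeSet.Finite := Set.toFinite _
  have hginj : ∀ a₁ ∈ G.edgeSet, ∀ a₂ ∈ G.edgeSet, g a₁ = g a₂ → a₁ = a₂ := by
    intro a₁ h₁ a₂ h₂ h12
    refine Set.inj_on_of_surj_on_of_ncard_le (t := Set.Icc s (s + q - 1))
      (fun a _ => g a) (fun a ha => Set.mem_Icc.mpr (hem a ha)) ?_ ?_ h₁ h₂ h12 hefin
    · intro b hb
      rw [← hS] at hb
      obtain ⟨u, v, huv, rfl⟩ := hb
      exact ⟨s(u, v), G.mem_edgeSet.mpr huv, (hgm u v)⟩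
    · rw [hq, ncard_Icc']; omega
  constructor
  · constructor
    · rw [hp, hq]
      refine ⟨?_, ?_, ?_⟩
      · rintro (v | e) -
        · exact ⟨(hvm v).1, le_trans (hvm v).2 (by omega)⟩
        · have := hem e.1 e.2
          simp only [Sum.elim_inr, Set.mem_Icc]
          omega
      · rintro (v | e) - (w | e') - h
        · simp only [Sum.elim_inl] at h
          exact congrArg _ (hfv.injOn (Set.mem_univ v) (Set.mem_univ w) h)
        · exfalso
          have h1 := (hvm v).2
          have h2 := hem e'.1 e'.2
          simp only [Sum.elim_inl, Sum.elim_inr] at h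
          omega
        · exfalso
          have h1 := (hvm w).2
          have h2 := hem e.1 e.2
          simp only [Sum.elim_inl, Sum.elim_inr] at h
          omega
        · simp only [Sum.elim_inr] at h
          have h1 := hem e.1 e.2
          have h2 := hem e'.1 e'.2
          have : g e.1 = g e'.1 := by omega
          exact congrArg _ (Subtype.ext (hginj _ e.2 _ e'.2 this))
      · intro y hy
        simp only [Set.mem_Icc] at hy
        rcases le_or_gt y p with h | h
        · obtain ⟨v, -, hv⟩ := hfv.surjOn (Set.mem_Icc.mpr ⟨hy.1, h⟩)
          exact ⟨Sum.inl v, Set.mem_univ _, hv⟩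
        · have hmem : p + q + s - y ∈ Set.Icc s (s + q - 1) := by
            simp only [Set.mem_Icc]; omega
          rw [← hS] at hmem
          obtain ⟨u, v, huv, hm⟩ := hmem
          refine ⟨Sum.inr ⟨s(u, v), G.mem_edgeSet.mpr huv⟩, Set.mem_univ _, ?_⟩
          simp only [Sum.elim_inr, hgm]
          omega
    · intro u v h
      simp only [Sum.elim_inl, Sum.elim_inr, hgm]
      have : fv u + fv v ∈ Set.Icc s (s + q - 1) := by
        rw [← hS]; exact ⟨u, v, h, rfl⟩
      have := Set.mem_Icc.mp this
      omega
  · intro v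
    rw [hp]; exact hvm v

lemma forward {V : Type*} [Fintype V] (G : SimpleGraph V) (p q : ℕ)
    (hp : Fintype.card V = p) (hq : G.edgeSet.ncard = q) (hq1 : 1 ≤ q)
    (F : V ⊕ G.edgeSet → ℕ) (k : ℕ) (h : IsSuperEdgeMagic G F k) :
    ∃ fv : V → ℕ, Set.BijOn fv Set.univ (Set.Icc 1 p) ∧
      ∃ s : ℕ, {m | ∃ u v, G.Adj u v ∧ m = fv u + fv v} = Set.Icc s (s + q - 1) := by
  classical
  obtain ⟨⟨hbij, hmagic⟩, hvert⟩ := h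
  rw [hp, hq] at hbij
  set fv : V → ℕ := fun v => F (Sum.inl v) with hfvdef
  have hvm : ∀ v : V, fv v ∈ Set.Icc 1 p := fun v => by rw [← hp]; exact hvert v
  have hFinj : ∀ x y : V ⊕ G.edgeSet, F x = F y → x = y := fun x y hxy =>
    hbij.injOn (Set.mem_univ x) (Set.mem_univ y) hxy
  have hinj : ∀ u w : V, fv u = fv w → u = w := fun u w huw =>
    Sum.inl.inj (hFinj _ _ huw)
  have hsurj : ∀ y ∈ Set.Icc 1 p, ∃ v : V, fv v = y := by
    intro y hy
    obtain ⟨a, ha, hay⟩ := Set.surj_on_of_inj_on_of_ncard_le (s := (Set.univ : Set V))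
      (fun v _ => fv v) (fun v _ => hvm v) (fun a₁ a₂ _ _ hh => hinj _ _ hh)
      (by rw [Set.ncard_univ, Nat.card_eq_fintype_card, hp, ncard_Icc']; omega)
      (Set.toFinite _) y hy
    exact ⟨a, hay.symm⟩
  have hbijv : Set.BijOn fv Set.univ (Set.Icc 1 p) := by
    refine ⟨fun v _ => hvm v, fun a _ b _ hh => hinj a b hh, fun y hy => ?_⟩
    obtain ⟨v, hv⟩ := hsurj y hy
    exact ⟨v, Set.mem_univ _, hv⟩
  have hE : ∀ e : G.edgeSet, F (Sum.inr e) ∈ Set.Icc (p + 1) (p + q) := by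
    intro e
    have h1 : F (Sum.inr e) ∈ Set.Icc 1 (p + q) := hbij.mapsTo (Set.mem_univ _)
    simp only [Set.mem_Icc] at h1 ⊢
    rcases le_or_gt (F (Sum.inr e)) p with hle | hlt
    · exfalso
      obtain ⟨v, hv⟩ := hsurj (F (Sum.inr e)) (Set.mem_Icc.mpr ⟨h1.1, hle⟩)
      exact absurd (hFinj _ _ hv) (by simp)
    · exact ⟨hlt, h1.2⟩
  have hEsurj : ∀ y ∈ Set.Icc (p + 1) (p + q), ∃ e : G.edgeSet, F (Sum.inr e) = y := by
    intro y hy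
    obtain ⟨e, he, hey⟩ := Set.surj_on_of_inj_on_of_ncard_le
      (s := (Set.univ : Set G.edgeSet)) (fun e _ => F (Sum.inr e))
      (fun e _ => hE e) (fun a₁ a₂ _ _ hh => Sum.inr.inj (hFinj _ _ hh))
      (by rw [Set.ncard_univ, Nat.card_coe_set_eq, hq, ncard_Icc']; omega)
      (Set.toFinite _) y hy
    exact ⟨e, hey.symm⟩
  -- the valence is at least p + q + 3
  have hk3 : p + q + 3 ≤ k := by
    obtain ⟨e, he⟩ := hEsurj (p + q) (Set.mem_Icc.mpr ⟨by omega, le_refl _⟩)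
    obtain ⟨u, v, huv, hev⟩ := edge_decomp G e
    have hm := hmagic u v huv
    have heq : (⟨s(u, v), G.mem_edgeSet.mpr huv⟩ : G.edgeSet) = e := Subtype.ext hev.symm
    rw [heq, he] at hm
    have h1 := (hvm u).1
    have h2 := (hvm v).1
    have hne : fv u ≠ fv v := fun hc => G.ne_of_adj huv (hinj _ _ hc)
    change fv u + fv v + (p + q) = k at hm
    omega
  refine ⟨fv, hbijv, k - (p + q), ?_⟩
  ext m
  simp only [Set.mem_setOf_eq, Set.mem_Icc]
  constructor
  · rintro ⟨u, v, huv, rfl⟩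
    have hm := hmagic u v huv
    have he := hE ⟨s(u, v), G.mem_edgeSet.mpr huv⟩
    simp only [Set.mem_Icc] at he
    change fv u + fv v + _ = k at hm
    omega
  · rintro ⟨h1, h2⟩
    obtain ⟨e, he⟩ := hEsurj (k - m) (Set.mem_Icc.mpr ⟨by omega, by omega⟩)
    obtain ⟨u, v, huv, hev⟩ := edge_decomp G e
    have hm := hmagic u v huv
    have heq : (⟨s(u, v), G.mem_edgeSet.mpr huv⟩ : G.edgeSet) = e := Subtype.ext hev.symm
    rw [heq, he] at hm
    change fv u + fv v + _ = k at hm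
    exact ⟨u, v, huv, by omega⟩

/-- A graph `G` with `p` vertices and `q ≥ 1` edges is super edge-magic if and
only if there is a bijection `fv : V(G) → {1, …, p}` such that the set
`S = {fv u + fv v : uv ∈ E(G)}` consists of `q` consecutive integers; moreover,
in that case `fv` extends to a super edge-magic labeling of `G` with valence
`p + q + s`, where `s = min S`. -/
theorem stmt_0 {V : Type*} [Fintype V] (G : SimpleGraph V) (p q : ℕ)
    (hp : Fintype.card V = p) (hq : G.edgeSet.ncard = q) (hq1 : 1 ≤ q) :
    ((∃ f k, IsSuperEdgeMagic G f k) ↔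
      ∃ fv : V → ℕ, Set.BijOn fv Set.univ (Set.Icc 1 p) ∧
        ∃ s : ℕ, {m | ∃ u v, G.Adj u v ∧ m = fv u + fv v} = Set.Icc s (s + q - 1)) ∧
    ∀ fv : V → ℕ, Set.BijOn fv Set.univ (Set.Icc 1 p) →
      ∀ s : ℕ, {m | ∃ u v, G.Adj u v ∧ m = fv u + fv v} = Set.Icc s (s + q - 1) →
        ∃ F : V ⊕ G.edgeSet → ℕ, (∀ v, F (Sum.inl v) = fv v) ∧
          IsSuperEdgeMagic G F (p + q + s) := by
  constructor
  · constructor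
    · rintro ⟨F, k, h⟩
      exact forward G p q hp hq hq1 F k h
    · rintro ⟨fv, hfv, s, hS⟩
      obtain ⟨F, -, hF⟩ := construct G p q hp hq hq1 fv hfv s hS
      exact ⟨F, p + q + s, hF⟩
  · intro fv hfv s hS
    exact construct G p q hp hq hq1 fv hfv s hS
end

section
/- If G is a super edge-magic graph with p ≥ 2 vertices and q edges, then q ≤ 2p − 3. -/
/-- If `G` is a super edge-magic graph with `p ≥ 2` vertices and `q` edges,
then `q ≤ 2p - 3`. -/
theorem stmt_1 {V : Type*} [Fintype V] (G : SimpleGraph V) (p q : ℕ)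
    (hp : Fintype.card V = p) (hq : G.edgeSet.ncard = q) (hp2 : 2 ≤ p)
    (hG : ∃ f k, IsSuperEdgeMagic G f k) :
    q ≤ 2 * p - 3 := by
  classical
  obtain ⟨f, k, ⟨⟨hbij, hmagic⟩, hvert⟩⟩ := hG
  have finj : Set.InjOn f Set.univ := hbij.injOn
  set g : Sym2 V → ℕ := fun e =>
    if h : e ∈ G.edgeSet then k - f (Sum.inr ⟨e, h⟩) else 0 with hg
  -- key facts about g on edges
  have key : ∀ e : Sym2 V, ∀ he : e ∈ G.edgeSet,
      g e + f (Sum.inr ⟨e, he⟩) = k ∧ g e ∈ Set.Icc 3 (2 * p - 1) := by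
    intro e
    induction e using Sym2.ind with
    | _ u v =>
      intro he
      have hadj : G.Adj u v := G.mem_edgeSet.mp he
      have hm := hmagic u v hadj
      have hge : g s(u, v) = f (Sum.inl u) + f (Sum.inl v) := by
        simp only [hg, dif_pos he]
        omega
      refine ⟨by omega, ?_⟩
      have hu := hvert u
      have hv := hvert v
      simp only [Set.mem_Icc, hp] at hu hv ⊢
      have hne : f (Sum.inl u) ≠ f (Sum.inl v) := fun h => hadj.ne
        (Sum.inl.inj (finj (Set.mem_univ _) (Set.mem_univ _) h))
      omega
  have hmem : ∀ e ∈ G.edgeSet, g e ∈ Set.Icc 3 (2 * p - 1) := fun e he => (key e he).2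
  have hinj : Set.InjOn g G.edgeSet := by
    intro e1 h1 e2 h2 hgeq
    obtain ⟨hk1, _⟩ := key e1 h1
    obtain ⟨hk2, _⟩ := key e2 h2
    have : f (Sum.inr ⟨e1, h1⟩) = f (Sum.inr ⟨e2, h2⟩) := by omega
    have := finj (Set.mem_univ _) (Set.mem_univ _) this
    exact congrArg Subtype.val (Sum.inr.inj this)
  have hcard := Set.ncard_le_ncard_of_injOn g hmem hinj (Set.finite_Icc _ _)
  have : (Set.Icc 3 (2 * p - 1)).ncard = 2 * p - 3 := by
    rw [← Finset.coe_Icc, Set.ncard_coe_finset, Nat.card_Icc]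
    omega
  omega
end

section
/- If G is a super edge-magic graph with p ≥ 4 vertices and q edges, where q = 2p − 3 or q = 2p − 4, then G contains a triangle (a cycle of length 3). -/
/-!
The vertex labels of a super edge-magic labeling are `1, …, p`, so the edge labels are
`p + 1, …, p + q`, and the magic condition says that the label sums `f u + f v` over the edges
run through `q` consecutive integers inside `[3, 2p - 1]`. For `q ≥ 2p - 4` these are
`3, …, q + 2`, or `4, …, 2p - 1` when `q = 2p - 4`; replacing every label `a` by `p + 1 - a`
turns the latter into `3, …, 2p - 2`. Either way every sum `3, …, p + 2` is realized by an edge.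
If there were no triangle, the edges with sums `3, …, p + 1` would have to be
`{1, 2}, …, {1, p}` (an edge `{a, b}` with `2 ≤ a < b` would close a triangle with `1`), and then
the edge with sum `p + 2` closes a triangle with `1`.
-/

open Function

namespace SimpleGraph

theorem exists_triangle_of_forall_exists_adj_add_eq {H : SimpleGraph ℕ} {p : ℕ} (hp : 1 ≤ p)
    (hsum : ∀ s, 3 ≤ s → s ≤ p + 2 →
      ∃ a b, H.Adj a b ∧ 1 ≤ a ∧ a < b ∧ b ≤ p ∧ a + b = s) :
    ∃ a b c, H.Adj a b ∧ H.Adj b c ∧ H.Adj a c := by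
  by_contra! hfree
  have hone : ∀ j, 2 ≤ j → j ≤ p → H.Adj 1 j := by
    intro j
    induction j using Nat.strong_induction_on with
    | _ j ih =>
      intro hj₂ hjp
      obtain ⟨a, b, hab, ha, hlt, -, hs⟩ := hsum (j + 1) (by omega) (by omega)
      obtain rfl | ha₂ : a = 1 ∨ 2 ≤ a := by omega
      · obtain rfl : b = j := by omega
        exact hab
      · exact (hfree 1 a b (ih a (by omega) ha₂ (by omega)) hab
          (ih b (by omega) (by omega) (by omega))).elim
  obtain ⟨a, b, hab, -, hlt, hbp, hs⟩ := hsum (p + 2) (by omega) le_rfl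
  exact hfree 1 a b (hone a (by omega) (by omega)) hab (hone b (by omega) hbp)

theorem exists_triangle_of_map {V W : Type*} {G : SimpleGraph V} (e : V ↪ W)
    (h : ∃ a b c, (G.map e).Adj a b ∧ (G.map e).Adj b c ∧ (G.map e).Adj a c) :
    ∃ a b c, G.Adj a b ∧ G.Adj b c ∧ G.Adj a c := by
  simp only [map_adj] at h
  obtain ⟨-, -, -, ⟨u, v, huv, rfl, rfl⟩, ⟨v', w, hvw, hv, rfl⟩, ⟨u', w', huw, hu, hw⟩⟩ := h
  obtain rfl := e.injective hv
  obtain rfl := e.injective hu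
  obtain rfl := e.injective hw
  exact ⟨_, _, _, huv, hvw, huw⟩

theorem exists_triangle_of_low_label_sums {V : Type*} {G : SimpleGraph V} {p : ℕ} (hp : 1 ≤ p)
    (e : V → ℕ) (he : Injective e) (hrange : ∀ u, e u ∈ Set.Icc 1 p)
    (hsum : ∀ s, 3 ≤ s → s ≤ p + 2 → ∃ u v, G.Adj u v ∧ e u + e v = s) :
    ∃ a b c, G.Adj a b ∧ G.Adj b c ∧ G.Adj a c := by
  refine exists_triangle_of_map ⟨e, he⟩
    (exists_triangle_of_forall_exists_adj_add_eq hp fun s hs₃ hs₂ => ?_)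
  obtain ⟨u, v, huv, hs⟩ := hsum s hs₃ hs₂
  obtain ⟨hu₁, hu₂⟩ := hrange u
  obtain ⟨hv₁, hv₂⟩ := hrange v
  rcases lt_or_gt_of_ne (he.ne huv.ne) with hlt | hlt
  · exact ⟨e u, e v, map_adj_apply.mpr huv, hu₁, hlt, hv₂, hs⟩
  · exact ⟨e v, e u, map_adj_apply.mpr huv.symm, hv₁, hlt, hu₂, by omega⟩

theorem exists_triangle_of_high_label_sums {V : Type*} {G : SimpleGraph V} {p : ℕ} (hp : 1 ≤ p)
    (e : V → ℕ) (he : Injective e) (hrange : ∀ u, e u ∈ Set.Icc 1 p)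
    (hsum : ∀ s, p ≤ s → s ≤ 2 * p - 1 → ∃ u v, G.Adj u v ∧ e u + e v = s) :
    ∃ a b c, G.Adj a b ∧ G.Adj b c ∧ G.Adj a c := by
  refine exists_triangle_of_low_label_sums hp (fun u => p + 1 - e u) (fun u v huv => ?_)
    (fun u => ?_) fun s hs₃ hs₂ => ?_
  · obtain ⟨hu₁, hu₂⟩ := hrange u
    obtain ⟨hv₁, hv₂⟩ := hrange v
    exact he (by simp only at huv; omega)
  · obtain ⟨hu₁, hu₂⟩ := hrange u
    exact ⟨by omega, by omega⟩
  · obtain ⟨u, v, huv, hs⟩ := hsum (2 * p + 2 - s) (by omega) (by omega)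
    obtain ⟨hu₁, hu₂⟩ := hrange u
    obtain ⟨hv₁, hv₂⟩ := hrange v
    exact ⟨u, v, huv, by omega⟩

end SimpleGraph

namespace IsSuperEdgeMagic

variable {V : Type*} [Fintype V] {G : SimpleGraph V} {f : V ⊕ G.edgeSet → ℕ} {k : ℕ}

theorem injective (hf : IsSuperEdgeMagic G f k) : Injective f :=
  fun x y => hf.1.1.injOn (Set.mem_univ x) (Set.mem_univ y)

theorem injective_vertexLabel (hf : IsSuperEdgeMagic G f k) :
    Injective (fun u => f (Sum.inl u)) :=
  hf.injective.comp Sum.inl_injective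

theorem exists_edgeLabel_eq (hf : IsSuperEdgeMagic G f k) {j : ℕ} (hj₁ : Fintype.card V < j)
    (hj₂ : j ≤ Fintype.card V + G.edgeSet.ncard) : ∃ e, f (Sum.inr e) = j := by
  obtain ⟨x, -, hx⟩ := hf.1.1.surjOn ⟨by omega, hj₂⟩
  rcases x with u | e
  · have := (hf.2 u).2
    omega
  · exact ⟨e, hx⟩

theorem exists_adj_add_eq (hf : IsSuperEdgeMagic G f k) {j : ℕ} (hj₁ : Fintype.card V < j)
    (hj₂ : j ≤ Fintype.card V + G.edgeSet.ncard) :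
    ∃ u v, G.Adj u v ∧ f (Sum.inl u) + f (Sum.inl v) + j = k := by
  obtain ⟨⟨z, hz⟩, rfl⟩ := hf.exists_edgeLabel_eq hj₁ hj₂
  induction z using Sym2.ind with
  | _ u v => exact ⟨u, v, hz, hf.1.2 u v hz⟩

theorem exists_adj_add_eq_of_lt (hf : IsSuperEdgeMagic G f k) {s : ℕ}
    (hs₁ : k ≤ s + Fintype.card V + G.edgeSet.ncard) (hs₂ : s + Fintype.card V < k) :
    ∃ u v, G.Adj u v ∧ f (Sum.inl u) + f (Sum.inl v) = s := by
  obtain ⟨u, v, huv, hk⟩ := hf.exists_adj_add_eq (j := k - s) (by omega) (by omega)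
  exact ⟨u, v, huv, by omega⟩

theorem add_vertexLabel_mem_Icc (hf : IsSuperEdgeMagic G f k) {u v : V} (huv : G.Adj u v) :
    f (Sum.inl u) + f (Sum.inl v) ∈ Set.Icc 3 (2 * Fintype.card V - 1) := by
  have hne := hf.injective_vertexLabel.ne huv.ne
  obtain ⟨hu₁, hu₂⟩ := hf.2 u
  obtain ⟨hv₁, hv₂⟩ := hf.2 v
  constructor <;> omega

end IsSuperEdgeMagic

/-- If `G` is a super edge-magic graph with `p ≥ 4` vertices and `q` edges,
where `q = 2p - 3` or `q = 2p - 4`, then `G` contains a triangle. -/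
theorem stmt_2 {V : Type*} [Fintype V] (G : SimpleGraph V) (p q : ℕ)
    (hp : Fintype.card V = p) (hq : G.edgeSet.ncard = q) (hp4 : 4 ≤ p)
    (hqval : q = 2 * p - 3 ∨ q = 2 * p - 4)
    (hG : ∃ f k, IsSuperEdgeMagic G f k) :
    ∃ a b c : V, G.Adj a b ∧ G.Adj b c ∧ G.Adj a c := by
  obtain ⟨f, k, hf⟩ := hG
  subst hp hq
  obtain ⟨u₀, v₀, h₀, hk₀⟩ := hf.exists_adj_add_eq (j := Fintype.card V + G.edgeSet.ncard)
    (by omega) le_rfl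
  obtain ⟨u₁, v₁, h₁, hk₁⟩ := hf.exists_adj_add_eq (j := Fintype.card V + 1) (lt_add_one _)
    (by omega)
  obtain ⟨hmin, -⟩ := hf.add_vertexLabel_mem_Icc h₀
  obtain ⟨-, hmax⟩ := hf.add_vertexLabel_mem_Icc h₁
  -- so the smallest label sum `k - p - q` is `3`, or it is `4` and then `q = 2p - 4`
  by_cases hk : k ≤ Fintype.card V + G.edgeSet.ncard + 3
  · exact SimpleGraph.exists_triangle_of_low_label_sums (by omega) _ hf.injective_vertexLabel hf.2
      fun s _ _ => hf.exists_adj_add_eq_of_lt (by omega) (by omega)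
  · exact SimpleGraph.exists_triangle_of_high_label_sums (by omega) _ hf.injective_vertexLabel hf.2
      fun s _ _ => hf.exists_adj_add_eq_of_lt (by omega) (by omega)
end

section
/- Let G be a super edge-magic graph with p vertices and q = 2p − 5 edges that contains a cycle and has girth at least 5 (no cycles of length 3 or 4). Then for every super edge-magic labeling f of G the set {f(u) + f(v) : uv ∈ E(G)} equals {4, 5, ..., 2p − 2}, so every super edge-magic labeling of G has valence 3p − 1; in particular |σ_G| = 1. -/
/-- A graph of egirth at least 5 has no triangles. -/
lemma tri_free_aux {V : Type*} (G : SimpleGraph V) (hgirth : 5 ≤ G.egirth)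
    {a b c : V} (hab : G.Adj a b) (hbc : G.Adj b c) (hca : G.Adj c a) : False := by
  set w : G.Walk a a := .cons hab (.cons hbc (.cons hca .nil)) with hw
  have hcyc : w.IsCycle := by
    rw [hw, SimpleGraph.Walk.cons_isCycle_iff]
    refine ⟨?_, ?_⟩
    · simp [SimpleGraph.Walk.cons_isPath_iff, hbc.ne, hca.ne, hca.ne', hab.ne, hab.ne']
    · simp [Sym2.eq_iff]
      exact ⟨⟨fun h _ => hab.ne h, hca.ne'⟩, ⟨fun h _ => hca.ne' h, hbc.ne⟩⟩
  have := SimpleGraph.le_egirth.mp hgirth a w hcyc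
  rw [hw] at this
  simp [SimpleGraph.Walk.length_cons] at this
  exact (by norm_num : ¬(5:ℕ∞) ≤ 3) this

lemma star_low_aux {V : Type*} {G : SimpleGraph V} {g : V → ℕ} {p : ℕ}
    (hinj : Function.Injective g) (hlb : ∀ v, 1 ≤ g v) (hub : ∀ v, g v ≤ p)
    (tri : ∀ a b c, G.Adj a b → G.Adj b c → G.Adj c a → False)
    {u1 : V} (h1 : g u1 = 1)
    (H : ∀ s, 3 ≤ s → s ≤ p + 2 → ∃ u v, G.Adj u v ∧ g u + g v = s)
    (hp : 5 ≤ p) : False := by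
  have key : ∀ i, 2 ≤ i → i + 1 ≤ p + 2 → ∃ w, G.Adj u1 w ∧ g w = i := by
    intro i
    induction i using Nat.strong_induction_on with
    | _ i IH =>
      intro h2 hle
      obtain ⟨u, v, huv, hsum⟩ := H (i + 1) (by omega) hle
      have hne : g u ≠ g v := fun h => huv.ne (hinj h)
      have hu1 := hlb u; have hv1 := hlb v
      by_cases hgu : g u = 1
      · have : u = u1 := hinj (by rw [hgu, h1])
        exact ⟨v, this ▸ huv, by omega⟩
      · by_cases hgv : g v = 1
        · have : v = u1 := hinj (by rw [hgv, h1])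
          exact ⟨u, this ▸ huv.symm, by omega⟩
        · obtain ⟨wu, hadju, hgwu⟩ := IH (g u) (by omega) (by omega) (by omega)
          obtain ⟨wv, hadjv, hgwv⟩ := IH (g v) (by omega) (by omega) (by omega)
          have e1 : wu = u := hinj hgwu
          have e2 : wv = v := hinj hgwv
          exact absurd (tri u1 u v (e1 ▸ hadju) huv (e2 ▸ hadjv).symm) not_false
  obtain ⟨w, _, hw⟩ := key (p + 1) (by omega) (by omega)
  have := hub w; omega

lemma star_high_aux {V : Type*} {G : SimpleGraph V} {g : V → ℕ} {p : ℕ}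
    (hinj : Function.Injective g) (hlb : ∀ v, 1 ≤ g v) (hub : ∀ v, g v ≤ p)
    (tri : ∀ a b c, G.Adj a b → G.Adj b c → G.Adj c a → False)
    {up : V} (hP : g up = p)
    (H : ∀ s, 5 ≤ s → s ≤ 2 * p - 1 → ∃ u v, G.Adj u v ∧ g u + g v = s)
    (hp : 5 ≤ p) : False := by
  have key : ∀ n i, i + n = p - 1 → 1 ≤ i → ∃ w, G.Adj up w ∧ g w = i := by
    intro n
    induction n using Nat.strong_induction_on with
    | _ n IH =>
      intro i hin h1
      obtain ⟨u, v, huv, hsum⟩ := H (p + i) (by omega) (by omega)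
      have hne : g u ≠ g v := fun h => huv.ne (hinj h)
      have hu1 := hub u; have hv1 := hub v
      have hu0 := hlb u; have hv0 := hlb v
      by_cases hgu : g u = p
      · have : u = up := hinj (by rw [hgu, hP])
        exact ⟨v, this ▸ huv, by omega⟩
      · by_cases hgv : g v = p
        · have : v = up := hinj (by rw [hgv, hP])
          exact ⟨u, this ▸ huv.symm, by omega⟩
        · obtain ⟨wu, hadju, hgwu⟩ := IH (p - 1 - g u) (by omega) (g u) (by omega) (by omega)
          obtain ⟨wv, hadjv, hgwv⟩ := IH (p - 1 - g v) (by omega) (g v) (by omega) (by omega)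
          have e1 : wu = u := hinj hgwu
          have e2 : wv = v := hinj hgwv
          exact absurd (tri up u v (e1 ▸ hadju) huv (e2 ▸ hadjv).symm) not_false
  obtain ⟨u, v, huv, hsum⟩ := H 5 (le_refl _) (by omega)
  have hne : g u ≠ g v := fun h => huv.ne (hinj h)
  have hu1 := hub u; have hv1 := hub v
  have hu0 := hlb u; have hv0 := hlb v
  obtain ⟨wu, hadju, hgwu⟩ := key (p - 1 - g u) (g u) (by omega) (by omega)
  obtain ⟨wv, hadjv, hgwv⟩ := key (p - 1 - g v) (g v) (by omega) (by omega)
  have e1 : wu = u := hinj hgwu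
  have e2 : wv = v := hinj hgwv
  exact tri up u v (e1 ▸ hadju) huv (e2 ▸ hadjv).symm

/-- Let `G` be a super edge-magic graph with `p` vertices and `q = 2p - 5`
edges that contains a cycle and has girth at least `5`. Then for every super
edge-magic labeling `f` of `G` the set `{f u + f v : uv ∈ E(G)}` equals
`{4, 5, …, 2p - 2}` and the valence is `3p - 1`; in particular the super
edge-magic set of `G` is `{3p - 1}` (so `|σ_G| = 1`). -/
theorem stmt_6 {V : Type*} [Fintype V] (G : SimpleGraph V) (p : ℕ)
    (hp : Fintype.card V = p) (hq : G.edgeSet.ncard = 2 * p - 5)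
    (hcyc : G.egirth ≠ ⊤) (hgirth : 5 ≤ G.egirth)
    (hG : ∃ f k, IsSuperEdgeMagic G f k) :
    (∀ f k, IsSuperEdgeMagic G f k →
      {m | ∃ u v, G.Adj u v ∧ m = f (Sum.inl u) + f (Sum.inl v)} =
        Set.Icc 4 (2 * p - 2) ∧ k = 3 * p - 1) ∧
    {k | ∃ f, IsSuperEdgeMagic G f k} = {3 * p - 1} := by
  classical
  -- `p ≥ 5`
  have hNA : ¬ G.IsAcyclic := fun h => hcyc h.egirth_eq_top
  obtain ⟨a, w, hwc, hlen⟩ := SimpleGraph.exists_egirth_eq_length.mpr hNA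
  have h5len : 5 ≤ w.length := by
    rw [hlen] at hgirth
    exact_mod_cast hgirth
  have hp5 : 5 ≤ p := by
    have hnd := hwc.support_nodup
    have hcardle := hnd.length_le_card
    have hlt : w.support.tail.length = w.length := by
      rw [List.length_tail, SimpleGraph.Walk.length_support]
      omega
    omega
  have tri : ∀ a b c : V, G.Adj a b → G.Adj b c → G.Adj c a → False :=
    fun a b c hab hbc hca => tri_free_aux G hgirth hab hbc hca
  haveI : Fintype ↥G.edgeSet := Fintype.ofFinite _
  have hcardE : Fintype.card ↥G.edgeSet = 2 * p - 5 := by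
    rw [← Nat.card_eq_fintype_card, Nat.card_coe_set_eq, hq]
  have main : ∀ f k, IsSuperEdgeMagic G f k →
      ({m | ∃ u v, G.Adj u v ∧ m = f (Sum.inl u) + f (Sum.inl v)} =
        Set.Icc 4 (2 * p - 2) ∧ k = 3 * p - 1) := by
    intro f k hf
    obtain ⟨⟨hbij, hmagic⟩, hvert⟩ := hf
    have hfinj : Function.Injective f := fun a b h => hbij.2.1 (Set.mem_univ a) (Set.mem_univ b) h
    have ginj : Function.Injective (fun v : V => f (Sum.inl v)) :=
      fun a b h => Sum.inl.inj (hfinj h)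
    have glb : ∀ v, 1 ≤ f (Sum.inl v) := fun v => (Set.mem_Icc.mp (hvert v)).1
    have gub : ∀ v, f (Sum.inl v) ≤ p := fun v => hp ▸ (Set.mem_Icc.mp (hvert v)).2
    -- vertex labels are exactly {1, ..., p}
    have himg : Finset.image (fun v : V => f (Sum.inl v)) Finset.univ = Finset.Icc 1 p := by
      apply Finset.eq_of_subset_of_card_le
      · intro i hi
        obtain ⟨v, _, rfl⟩ := Finset.mem_image.mp hi
        exact Finset.mem_Icc.mpr ⟨glb v, gub v⟩
      · rw [Nat.card_Icc, Finset.card_image_of_injective _ ginj, Finset.card_univ, hp]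
        omega
    have gsurj : ∀ i, 1 ≤ i → i ≤ p → ∃ v, f (Sum.inl v) = i := by
      intro i h1 h2
      have : i ∈ Finset.image (fun v : V => f (Sum.inl v)) Finset.univ := by
        rw [himg]; exact Finset.mem_Icc.mpr ⟨h1, h2⟩
      obtain ⟨v, _, hv⟩ := Finset.mem_image.mp this
      exact ⟨v, hv⟩
    -- edge labels are in {p+1, ..., 3p-5}
    have hhub : ∀ e : G.edgeSet, f (Sum.inr e) ≤ 3 * p - 5 := by
      intro e
      have := (Set.mem_Icc.mp (hbij.1 (Set.mem_univ (Sum.inr e)))).2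
      rw [hp, hq] at this
      omega
    have hh1 : ∀ e : G.edgeSet, 1 ≤ f (Sum.inr e) :=
      fun e => (Set.mem_Icc.mp (hbij.1 (Set.mem_univ (Sum.inr e)))).1
    have hhlow : ∀ e : G.edgeSet, p + 1 ≤ f (Sum.inr e) := by
      intro e
      by_contra hcon
      obtain ⟨v, hv⟩ := gsurj (f (Sum.inr e)) (hh1 e) (by omega)
      exact absurd (hfinj hv) (by simp)
    have hinjE : Function.Injective (fun e : G.edgeSet => f (Sum.inr e)) :=
      fun a b h => Sum.inr.inj (hfinj h)
    have himgE : Finset.image (fun e : G.edgeSet => f (Sum.inr e)) Finset.univ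
        = Finset.Icc (p + 1) (3 * p - 5) := by
      apply Finset.eq_of_subset_of_card_le
      · intro i hi
        obtain ⟨e, _, rfl⟩ := Finset.mem_image.mp hi
        exact Finset.mem_Icc.mpr ⟨hhlow e, hhub e⟩
      · rw [Nat.card_Icc, Finset.card_image_of_injective _ hinjE, Finset.card_univ, hcardE]
        omega
    have hsurjE : ∀ m, p + 1 ≤ m → m ≤ 3 * p - 5 → ∃ e : G.edgeSet, f (Sum.inr e) = m := by
      intro m h1 h2
      have : m ∈ Finset.image (fun e : G.edgeSet => f (Sum.inr e)) Finset.univ := by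
        rw [himgE]; exact Finset.mem_Icc.mpr ⟨h1, h2⟩
      obtain ⟨e, _, he⟩ := Finset.mem_image.mp this
      exact ⟨e, he⟩
    -- representing edges by their endpoints
    have edge_repr : ∀ e : G.edgeSet, ∃ u v, ∃ h' : G.Adj u v,
        e = ⟨s(u, v), G.mem_edgeSet.mpr h'⟩ := by
      rintro ⟨e, he⟩
      induction e with
      | _ u v => exact ⟨u, v, G.mem_edgeSet.mp he, rfl⟩
    -- bounds on sums of adjacent vertex labels
    have hsumb : ∀ u v : V, G.Adj u v →
        3 ≤ f (Sum.inl u) + f (Sum.inl v) ∧ f (Sum.inl u) + f (Sum.inl v) ≤ 2 * p - 1 := by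
      intro u v huv
      have hne : f (Sum.inl u) ≠ f (Sum.inl v) := fun h => huv.ne (ginj h)
      have := glb u; have := glb v; have := gub u; have := gub v
      omega
    -- realizing each edge label as a sum
    have realize : ∀ m, p + 1 ≤ m → m ≤ 3 * p - 5 →
        ∃ u v, G.Adj u v ∧ f (Sum.inl u) + f (Sum.inl v) + m = k := by
      intro m h1 h2
      obtain ⟨e, he⟩ := hsurjE m h1 h2
      obtain ⟨u, v, h', hrep⟩ := edge_repr e
      rw [hrep] at he
      refine ⟨u, v, h', ?_⟩
      rw [← he]
      exact hmagic u v h'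
    -- bounds on k
    have hk_low : 3 * p - 2 ≤ k := by
      obtain ⟨u, v, huv, hs⟩ := realize (3 * p - 5) (by omega) (le_refl _)
      have := (hsumb u v huv).1
      omega
    have hk_high : k ≤ 3 * p := by
      obtain ⟨u, v, huv, hs⟩ := realize (p + 1) (le_refl _) (by omega)
      have := (hsumb u v huv).2
      omega
    -- rule out k = 3p - 2 and k = 3p
    have hk_ne_low : k ≠ 3 * p - 2 := by
      intro hk
      obtain ⟨u1, hu1⟩ := gsurj 1 (le_refl _) (by omega)
      refine star_low_aux ginj glb gub tri hu1 ?_ hp5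
      intro s h3 hs
      obtain ⟨u, v, huv, hsum⟩ := realize (3 * p - 2 - s) (by omega) (by omega)
      exact ⟨u, v, huv, by omega⟩
    have hk_ne_high : k ≠ 3 * p := by
      intro hk
      obtain ⟨up, hup⟩ := gsurj p (by omega) (le_refl _)
      refine star_high_aux ginj glb gub tri hup ?_ hp5
      intro s h5 hs
      obtain ⟨u, v, huv, hsum⟩ := realize (3 * p - s) (by omega) (by omega)
      exact ⟨u, v, huv, by omega⟩
    have hk : k = 3 * p - 1 := by omega
    refine ⟨?_, hk⟩
    ext m
    simp only [Set.mem_setOf_eq, Set.mem_Icc]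
    constructor
    · rintro ⟨u, v, huv, rfl⟩
      have hmag := hmagic u v huv
      have h1 := hhlow ⟨s(u, v), G.mem_edgeSet.mpr huv⟩
      have h2 := hhub ⟨s(u, v), G.mem_edgeSet.mpr huv⟩
      omega
    · rintro ⟨h4, h2p⟩
      obtain ⟨u, v, huv, hsum⟩ := realize (3 * p - 1 - m) (by omega) (by omega)
      exact ⟨u, v, huv, by omega⟩
  refine ⟨main, ?_⟩
  ext k
  simp only [Set.mem_setOf_eq, Set.mem_singleton_iff]
  constructor
  · rintro ⟨f, hf⟩
    exact (main f k hf).2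
  · intro hk
    obtain ⟨f0, k0, hf0⟩ := hG
    have hk0 := (main f0 k0 hf0).2
    exact ⟨f0, by rwa [hk, ← hk0]⟩
end

section
/- For all positive integers n and l, and every super edge-magic labeling f of K_{1,n} ∪ lK_1, the set of labels assigned to the leaves, {f(y_1), ..., f(y_n)}, is a set of n consecutive integers. -/
/-- The graph `K_{1,n} ∪ lK_1`: the disjoint union of the star `K_{1,n}`
(with center `0` and leaves `1, …, n`) and `l` isolated vertices
(`n+1, …, n+l`), on `n + l + 1` vertices. -/
def starUnion (n l : ℕ) : SimpleGraph (Fin (n + l + 1)) where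
  Adj u v := (u = 0 ∧ v ≠ 0 ∧ (v : ℕ) ≤ n) ∨ (v = 0 ∧ u ≠ 0 ∧ (u : ℕ) ≤ n)
  symm := ⟨fun u v h => h.symm⟩
  loopless := ⟨fun v h => by rcases h with ⟨h1, h2, _⟩ | ⟨h1, h2, _⟩ <;> exact h2 h1⟩

open Set

section SuperEdgeMagic

variable {V : Type*} [Fintype V] {G : SimpleGraph V} {f : V ⊕ G.edgeSet → ℕ} {k : ℕ}

theorem IsEdgeMagic.injective (hf : IsEdgeMagic G f k) : Function.Injective f :=
  injOn_univ.1 hf.1.injOn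

theorem IsSuperEdgeMagic.range_inl (hf : IsSuperEdgeMagic G f k) :
    range (f ∘ Sum.inl) = Icc 1 (Fintype.card V) := by
  refine eq_of_subset_of_ncard_le (range_subset_iff.2 hf.2) ?_ (finite_Icc _ _)
  rw [ncard_range_of_injective (hf.1.injective.comp Sum.inl_injective), Nat.card_eq_fintype_card,
    ncard_Icc_nat, Nat.add_sub_cancel]

theorem IsSuperEdgeMagic.range_inr (hf : IsSuperEdgeMagic G f k) :
    range (f ∘ Sum.inr) = Icc (Fintype.card V + 1) (Fintype.card V + G.edgeSet.ncard) := by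
  have hunion := Sum.range_eq f
  rw [← image_univ, hf.1.1.image_eq, hf.range_inl] at hunion
  have hdisj : Disjoint (Icc 1 (Fintype.card V)) (range (f ∘ Sum.inr)) := by
    rw [← hf.range_inl]
    exact disjoint_range_iff.2 fun _ _ h => Sum.inl_ne_inr (hf.1.injective h)
  calc range (f ∘ Sum.inr)
      = (Icc 1 (Fintype.card V) ∪ range (f ∘ Sum.inr)) \ Icc 1 (Fintype.card V) :=
        hdisj.sup_sdiff_cancel_left.symm
    _ = _ := by
      rw [← hunion]
      ext m
      simp only [mem_sdiff, mem_Icc]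
      omega

end SuperEdgeMagic

section StarUnion

variable {n l : ℕ}

theorem starUnion_adj_zero {v : Fin (n + l + 1)} :
    (starUnion n l).Adj 0 v ↔ v ≠ 0 ∧ (v : ℕ) ≤ n := by
  simp [starUnion]

theorem starUnion_exists_adj_zero_of_mem_edgeSet {e : Sym2 (Fin (n + l + 1))}
    (he : e ∈ (starUnion n l).edgeSet) : ∃ v, (starUnion n l).Adj 0 v ∧ e = s(0, v) := by
  induction e using Sym2.ind with
  | _ u v =>
    rcases he with ⟨rfl, hv⟩ | ⟨rfl, hu⟩
    · exact ⟨v, Or.inl ⟨rfl, hv⟩, rfl⟩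
    · exact ⟨u, Or.inl ⟨rfl, hu⟩, Sym2.eq_swap⟩

theorem starUnion_edgeSet :
    (starUnion n l).edgeSet = (fun v => s(0, v)) '' (starUnion n l).neighborSet 0 := by
  ext e
  constructor
  · intro he
    obtain ⟨v, hv, rfl⟩ := starUnion_exists_adj_zero_of_mem_edgeSet he
    exact ⟨v, hv, rfl⟩
  · rintro ⟨v, hv, rfl⟩
    exact hv

theorem starUnion_image_val_neighborSet_zero :
    Fin.val '' (starUnion n l).neighborSet 0 = Icc 1 n := by
  ext m
  simp only [mem_image, SimpleGraph.mem_neighborSet, starUnion_adj_zero, mem_Icc]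
  constructor
  · rintro ⟨v, ⟨hv0, hvn⟩, rfl⟩
    exact ⟨Nat.pos_of_ne_zero (Fin.val_ne_zero_iff.2 hv0), hvn⟩
  · rintro ⟨h1, h2⟩
    exact ⟨⟨m, by omega⟩, ⟨Fin.val_ne_zero_iff.1 (by omega : m ≠ 0), h2⟩, rfl⟩

theorem starUnion_ncard_edgeSet : (starUnion n l).edgeSet.ncard = n := by
  rw [starUnion_edgeSet, ncard_image_of_injective _ fun _ _ => Sym2.congr_right.1,
    ← ncard_image_of_injective _ Fin.val_injective, starUnion_image_val_neighborSet_zero,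
    ncard_Icc_nat, Nat.add_sub_cancel]

end StarUnion

theorem IsEdgeMagic.starUnion_exists_leaf {n l k : ℕ}
    {f : Fin (n + l + 1) ⊕ (starUnion n l).edgeSet → ℕ} (hf : IsEdgeMagic (starUnion n l) f k)
    (e : (starUnion n l).edgeSet) :
    ∃ v, (starUnion n l).Adj 0 v ∧ f (Sum.inl 0) + f (Sum.inl v) + f (Sum.inr e) = k := by
  obtain ⟨e, he⟩ := e
  obtain ⟨v, hv, rfl⟩ := starUnion_exists_adj_zero_of_mem_edgeSet he
  exact ⟨v, hv, hf.2 0 v hv⟩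

theorem stmt_11_general (n l : ℕ) (hn : 1 ≤ n)
    (f : Fin (n + l + 1) ⊕ (starUnion n l).edgeSet → ℕ) (k : ℕ)
    (hf : IsSuperEdgeMagic (starUnion n l) f k) :
    ∃ a : ℕ, {m | ∃ v : Fin (n + l + 1), v ≠ 0 ∧ (v : ℕ) ≤ n ∧ f (Sum.inl v) = m} =
      Set.Icc a (a + n - 1) := by
  have hedges : range (f ∘ Sum.inr) = Icc (n + l + 2) (n + l + 1 + n) := by
    simpa only [Fintype.card_fin, starUnion_ncard_edgeSet] using hf.range_inr
  have hleaf (t : ℕ) (ht : t ∈ Icc (n + l + 2) (n + l + 1 + n)) :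
      ∃ v, (starUnion n l).Adj 0 v ∧ f (Sum.inl 0) + f (Sum.inl v) + t = k := by
    obtain ⟨e, rfl⟩ := hedges ▸ ht
    exact hf.1.starUnion_exists_leaf e
  -- keeps the truncated subtractions below exact
  have hk : f (Sum.inl 0) + (n + l + 1 + n) < k := by
    obtain ⟨v, -, hv⟩ := hleaf (n + l + 1 + n) ⟨by omega, le_rfl⟩
    have := (hf.2 v).1
    omega
  refine ⟨k - f (Sum.inl 0) - (n + l + 1 + n), Set.ext fun m => ⟨?_, fun hm => ?_⟩⟩
  · rintro ⟨v, hv0, hvn, rfl⟩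
    have hv := starUnion_adj_zero.2 ⟨hv0, hvn⟩
    have hsum : f (Sum.inl 0) + f (Sum.inl v) + f (Sum.inr ⟨s(0, v), hv⟩) = k := hf.1.2 0 v hv
    obtain ⟨he₁, he₂⟩ : f (Sum.inr ⟨s(0, v), hv⟩) ∈ Icc (n + l + 2) (n + l + 1 + n) :=
      hedges ▸ mem_range_self (f := f ∘ Sum.inr) _
    exact ⟨by omega, by omega⟩
  · obtain ⟨hm₁, hm₂⟩ := hm
    obtain ⟨v, hv, hsum⟩ := hleaf (k - f (Sum.inl 0) - m) ⟨by omega, by omega⟩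
    exact ⟨v, (starUnion_adj_zero.1 hv).1, (starUnion_adj_zero.1 hv).2, by omega⟩

/-- For all positive integers `n` and `l`, and every super edge-magic labeling
`f` of `K_{1,n} ∪ lK_1`, the set of labels assigned to the leaves is a set of
`n` consecutive integers. -/
theorem stmt_11 (n l : ℕ) (hn : 1 ≤ n) (hl : 1 ≤ l)
    (f : Fin (n + l + 1) ⊕ (starUnion n l).edgeSet → ℕ) (k : ℕ)
    (hf : IsSuperEdgeMagic (starUnion n l) f k) :
    ∃ a : ℕ, {m | ∃ v : Fin (n + l + 1), v ≠ 0 ∧ (v : ℕ) ≤ n ∧ f (Sum.inl v) = m} =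
      Set.Icc a (a + n - 1) :=
  stmt_11_general n l hn f k hf
end

section
/- Let n and l be positive integers with 2l + 3 ≥ n + 2. Then the set of valences of super edge-magic labelings of K_{1,n} ∪ lK_1 is exactly the set of integers k with 2n + l + 4 ≤ k ≤ 3n + 3l + 3; that is, every super edge-magic labeling of K_{1,n} ∪ lK_1 has valence in this range, and for every integer k in this range there exists a super edge-magic labeling of K_{1,n} ∪ lK_1 with valence k. -/
/-!
In a super edge-magic labeling the vertices receive `{1, …, p}`, so the edges receive
`{p + 1, …, p + n}`. Summing the magic condition over the `n` spokes `xyᵢ` gives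
`n k = (n - 1) f(x) + (f(x) + ∑ f(yᵢ)) + ∑_{j = p+1}^{p+n} j`, where `f(x) + ∑ f(yᵢ)` is a sum of
`n + 1` distinct elements of `{1, …, p}` and so lies between the sums of the `n + 1` smallest and
the `n + 1` largest of them; together with `1 ≤ f(x) ≤ p` this confines `k`.

Conversely, give the center a label `c`, the leaves the block `m, …, m + n - 1` not containing `c`,
the isolated vertices the remaining labels, and each spoke the label completing its sum to
`k = c + m + 2n + l + 1`; the spokes then receive `n + l + 2, …, 2n + l + 1`. Every `k` in the
range splits in this way.
-/

open Finset

namespace Finset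

theorem card_mul_card_add_one_le_two_mul_sum (S : Finset ℕ) (hS : 0 ∉ S) :
    #S * (#S + 1) ≤ 2 * ∑ x ∈ S, x := by
  induction S using Finset.induction_on_max with
  | empty => simp
  | insert a s hlt ih =>
    have ha : a ∉ s := fun h => lt_irrefl a (hlt a h)
    have hs : 0 ∉ s := fun h => hS (mem_insert_of_mem h)
    have hcard : #s + 1 ≤ a := by
      have hsub : s ⊆ Ico 1 a := fun x hx => by
        have := hlt x hx
        have : x ≠ 0 := fun h => hs (h ▸ hx)
        simp only [mem_Ico]; omega
      have := card_le_card hsub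
      rw [Nat.card_Ico] at this
      have : a ≠ 0 := fun h => hS (h ▸ mem_insert_self a s)
      omega
    rw [card_insert_of_notMem ha, sum_insert ha]
    nlinarith [ih hs]

-- Apply the lower bound to the reflection `x ↦ p + 1 - x` of `S`.
theorem two_mul_sum_add_card_mul_card_add_one_le {S : Finset ℕ} {p : ℕ} (hS : S ⊆ Icc 1 p) :
    2 * ∑ x ∈ S, x + #S * (#S + 1) ≤ 2 * #S * (p + 1) := by
  have hle : ∀ x ∈ S, 1 ≤ x ∧ x ≤ p := fun x hx => mem_Icc.mp (hS hx)
  have hinj : Set.InjOn (fun x => p + 1 - x) S := fun x hx y hy h => by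
    have := hle x hx; have := hle y hy; simp only at h; omega
  have hrefl := card_mul_card_add_one_le_two_mul_sum (S.image fun x => p + 1 - x) (by
    simp only [mem_image, not_exists, not_and]
    intro x hx; have := hle x hx; omega)
  rw [card_image_of_injOn hinj, sum_image hinj] at hrefl
  have hsum : ∑ x ∈ S, (p + 1 - x) + ∑ x ∈ S, x = #S * (p + 1) := by
    rw [← sum_add_distrib, sum_congr rfl fun x hx => Nat.sub_add_cancel (by have := hle x hx; omega),
      sum_const, smul_eq_mul]
  nlinarith

theorem two_mul_sum_Icc_add (p n : ℕ) :
    2 * ∑ j ∈ Icc (p + 1) (p + n), j = n * (2 * p + n + 1) := by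
  induction n with
  | zero => simp
  | succ n ih =>
    rw [← add_assoc, sum_Icc_succ_top (by omega)]
    nlinarith

end Finset

theorem Function.Injective.bijOn_univ_of_ncard_le {α β : Type*} [Finite α] {g : α → β}
    {t : Set β} (hg : g.Injective) (hmaps : ∀ a, g a ∈ t) (hcard : t.ncard ≤ Nat.card α)
    (ht : t.Finite := by toFinite_tac) : Set.BijOn g Set.univ t := by
  refine ⟨fun a _ => hmaps a, hg.injOn, ?_⟩
  have himage : g '' Set.univ = t := by
    refine Set.eq_of_subset_of_ncard_le (by rintro _ ⟨a, -, rfl⟩; exact hmaps a) ?_ ht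
    rwa [hg.injOn.ncard_image, Set.ncard_univ]
  exact himage.ge

section SuperEdgeMagic

variable {V : Type*} [Fintype V] {G : SimpleGraph V} {f : V ⊕ G.edgeSet → ℕ} {k : ℕ}

theorem isSuperEdgeMagic_iff :
    IsSuperEdgeMagic G f k ↔
      Set.BijOn (fun v => f (Sum.inl v)) Set.univ (Set.Icc 1 (Fintype.card V)) ∧
      Set.BijOn (fun e => f (Sum.inr e)) Set.univ
        (Set.Icc (Fintype.card V + 1) (Fintype.card V + G.edgeSet.ncard)) ∧
      ∀ u v, ∀ h : G.Adj u v,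
        f (Sum.inl u) + f (Sum.inl v) + f (Sum.inr ⟨s(u, v), G.mem_edgeSet.mpr h⟩) = k := by
  constructor
  · rintro ⟨⟨⟨hmaps, hinj, hsurj⟩, hmagic⟩, hvert⟩
    have hinj' : f.Injective := Set.injOn_univ.mp hinj
    have hV : Set.BijOn (fun v => f (Sum.inl v)) Set.univ (Set.Icc 1 (Fintype.card V)) :=
      (hinj'.comp Sum.inl_injective).bijOn_univ_of_ncard_le hvert (by simp)
    refine ⟨hV, ⟨fun e _ => ?_, fun e _ e' _ h => Sum.inr_injective (hinj' h), fun y hy => ?_⟩,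
      hmagic⟩
    · obtain ⟨-, hle⟩ := hmaps (Set.mem_univ (Sum.inr e))
      refine ⟨Nat.not_le.mp fun hlt => ?_, hle⟩
      obtain ⟨v, -, hv⟩ := hV.surjOn ⟨(hmaps (Set.mem_univ _)).1, hlt⟩
      exact Sum.inl_ne_inr (hinj' hv)
    · obtain ⟨x, -, rfl⟩ := hsurj ⟨by have := hy.1; omega, hy.2⟩
      rcases x with v | e
      · exact absurd (hvert v).2 (by have := hy.1; omega)
      · exact ⟨e, trivial, rfl⟩
  · rintro ⟨hV, hE, hmagic⟩
    refine ⟨⟨⟨?_, ?_, fun y hy => ?_⟩, hmagic⟩, fun v => hV.mapsTo (Set.mem_univ v)⟩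
    · rintro (v | e) -
      · have := hV.mapsTo (Set.mem_univ v); exact ⟨this.1, by have := this.2; omega⟩
      · have := hE.mapsTo (Set.mem_univ e); exact ⟨by have := this.1; omega, this.2⟩
    · rintro (v | e) - (v' | e') - h
      · rw [hV.injOn trivial trivial h]
      · have := (hV.mapsTo (Set.mem_univ v)).2; have := (hE.mapsTo (Set.mem_univ e')).1
        omega
      · have := (hE.mapsTo (Set.mem_univ e)).1; have := (hV.mapsTo (Set.mem_univ v')).2
        omega
      · rw [hE.injOn trivial trivial h]
    · by_cases hyp : y ≤ Fintype.card V
      · obtain ⟨v, -, hv⟩ := hV.surjOn ⟨hy.1, hyp⟩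
        exact ⟨Sum.inl v, trivial, hv⟩
      · obtain ⟨e, -, he⟩ := hE.surjOn ⟨by omega, hy.2⟩
        exact ⟨Sum.inr e, trivial, he⟩

end SuperEdgeMagic

namespace starUnion

variable {n l : ℕ}

def leaf (i : Fin n) : Fin (n + l + 1) := Fin.castLE (by omega) i.succ

@[simp] theorem val_leaf (i : Fin n) : (leaf (l := l) i : ℕ) = i + 1 := rfl

theorem adj_zero_leaf (i : Fin n) : (starUnion n l).Adj 0 (leaf i) :=
  Or.inl ⟨rfl, fun h => by simpa using congrArg Fin.val h, i.isLt⟩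

def spoke (i : Fin n) : (starUnion n l).edgeSet :=
  ⟨s(0, leaf i), (starUnion n l).mem_edgeSet.mpr (adj_zero_leaf i)⟩

theorem exists_leaf_eq {w : Fin (n + l + 1)} (hw0 : w ≠ 0) (hwn : (w : ℕ) ≤ n) :
    ∃ i : Fin n, leaf i = w := by
  have := Fin.val_ne_zero_iff.mpr hw0
  exact ⟨⟨w - 1, by omega⟩, Fin.ext (by simp; omega)⟩

theorem spoke_bijective : (spoke : Fin n → (starUnion n l).edgeSet).Bijective := by
  refine ⟨fun i j h => ?_, ?_⟩
  · have := congrArg Fin.val (Sym2.congr_right.mp (congrArg Subtype.val h))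
    simp only [val_leaf] at this
    exact Fin.ext (by omega)
  · rintro ⟨e, he⟩
    induction e using Sym2.ind with
    | _ u v =>
      rcases (SimpleGraph.mem_edgeSet _).mp he with ⟨rfl, hv0, hvn⟩ | ⟨rfl, hu0, hun⟩
      · obtain ⟨i, rfl⟩ := exists_leaf_eq hv0 hvn
        exact ⟨i, rfl⟩
      · obtain ⟨i, rfl⟩ := exists_leaf_eq hu0 hun
        exact ⟨i, Subtype.ext Sym2.eq_swap⟩

theorem ncard_edgeSet : (starUnion n l).edgeSet.ncard = n := by
  rw [← Nat.card_coe_set_eq, ← Nat.card_eq_of_bijective _ spoke_bijective, Nat.card_eq_fintype_card,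
    Fintype.card_fin]

end starUnion

open starUnion in
theorem valence_mem_Icc_of_isSuperEdgeMagic_starUnion {n l k : ℕ} (hn : 1 ≤ n)
    {f : Fin (n + l + 1) ⊕ (starUnion n l).edgeSet → ℕ}
    (hf : IsSuperEdgeMagic (starUnion n l) f k) :
    k ∈ Set.Icc (2 * n + l + 4) (3 * n + 3 * l + 3) := by
  obtain ⟨hV, hE, hmagic⟩ := isSuperEdgeMagic_iff.mp hf
  rw [Fintype.card_fin] at hV hE
  rw [ncard_edgeSet] at hE
  set c := f (Sum.inl 0)
  have hk : n * k = n * c + ∑ i, f (Sum.inl (leaf i)) + ∑ i, f (Sum.inr (spoke i)) := by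
    have hspoke : ∀ i, c + f (Sum.inl (leaf i)) + f (Sum.inr (spoke i)) = k := fun i =>
      hmagic 0 (leaf i) (adj_zero_leaf i)
    have := sum_congr rfl fun i (_ : i ∈ univ) => hspoke i
    simp only [sum_add_distrib, sum_const, card_univ, Fintype.card_fin, smul_eq_mul] at this
    linarith
  have hedges : 2 * ∑ i, f (Sum.inr (spoke i)) = n * (2 * (n + l + 1) + n + 1) := by
    have hb := hE.comp spoke_bijective.bijOn_univ
    rw [← two_mul_sum_Icc_add]
    congr 1
    exact sum_nbij _ (fun i _ => by simpa using hb.mapsTo (Set.mem_univ i))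
      (fun i _ j _ h => hb.injOn trivial trivial h)
      (fun y hy => by simpa using hb.surjOn (by simpa using hy)) fun _ _ => rfl
  set T := univ.image fun j : Fin (n + 1) => f (Sum.inl (Fin.castLE (by omega) j))
  have hTsum : ∑ x ∈ T, x = c + ∑ i, f (Sum.inl (leaf i)) := by
    rw [sum_image fun i _ j _ h => Fin.castLE_injective _ (hV.injOn trivial trivial h),
      Fin.sum_univ_succ]
    rfl
  have hTcard : #T = n + 1 := by
    rw [card_image_of_injective _ fun i j h => Fin.castLE_injective _ (hV.injOn trivial trivial h),
      card_univ, Fintype.card_fin]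
  have hTsub : T ⊆ Icc 1 (n + l + 1) := by
    intro x hx
    obtain ⟨j, -, rfl⟩ := mem_image.mp hx
    simpa using hV.mapsTo (Set.mem_univ _)
  have hlo := card_mul_card_add_one_le_two_mul_sum T (fun h => by simpa using hTsub h)
  have hhi := two_mul_sum_add_card_mul_card_add_one_le hTsub
  rw [hTcard, hTsum] at hlo hhi
  have hc : 1 ≤ c ∧ c ≤ n + l + 1 := hV.mapsTo (Set.mem_univ 0)
  constructor
  · refine Nat.le_of_mul_le_mul_left ?_ (show 0 < n by omega)
    nlinarith
  · refine Nat.le_of_mul_le_mul_left ?_ (show 0 < n by omega)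
    nlinarith

open starUnion in
theorem exists_isSuperEdgeMagic_starUnion_of_center_leaves {n l c m : ℕ} (hc : 1 ≤ c)
    (hcp : c ≤ n + l + 1) (hm : 1 ≤ m) (hmp : m + n ≤ n + l + 2) (hcm : c < m ∨ m + n ≤ c) :
    ∃ f, IsSuperEdgeMagic (starUnion n l) f (c + m + 2 * n + l + 1) := by
  set k := c + m + 2 * n + l + 1
  let w : Fin (n + l + 1) → ℕ := fun v => if (v : ℕ) = 0 then c else m + v - 1
  have hw : Set.MapsTo w {v | (v : ℕ) ≤ n} (Icc 1 (n + l + 1)) := fun v (hv : (v : ℕ) ≤ n) => by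
    simp only [w, coe_Icc, Set.mem_Icc]
    split_ifs <;> omega
  have hwinj : Set.InjOn w {v | (v : ℕ) ≤ n} :=
    fun u (hu : (u : ℕ) ≤ n) v (hv : (v : ℕ) ≤ n) huv => by
    simp only [w] at huv
    exact Fin.ext (by split_ifs at huv <;> omega)
  obtain ⟨e, he⟩ := hw.exists_equiv_extend_of_card_eq (by simp) hwinj
  let g : Fin (n + l + 1) → ℕ := fun v => e v
  have hg0 : g 0 = c := by simp [g, he 0 (by simp), w]
  have hgleaf (i : Fin n) : g (leaf i) = m + i := by
    simp only [g, he (leaf i) i.isLt, w, val_leaf, Nat.add_one_ne_zero, if_false]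
    omega
  have hV : Set.BijOn g Set.univ (Set.Icc 1 (Fintype.card (Fin (n + l + 1)))) :=
    (Subtype.val_injective.comp e.injective).bijOn_univ_of_ncard_le
      (fun v => by rw [Fintype.card_fin]; exact mem_Icc.mp (e v).2) (by simp)
  let h : (starUnion n l).edgeSet → ℕ := fun e =>
    k - Sym2.lift ⟨fun u v => g u + g v, fun _ _ => add_comm _ _⟩ e.1
  have hspoke : Set.BijOn (h ∘ spoke) Set.univ (Set.Icc (n + l + 1 + 1) (n + l + 1 + n)) := by
    have hval (i : Fin n) : h (spoke i) = 2 * n + l + 1 - i := by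
      simp only [h, spoke, Sym2.lift_mk, hg0, hgleaf]
      omega
    refine Function.Injective.bijOn_univ_of_ncard_le (fun i j hij => ?_) (fun i => ?_) (by simp)
    · simp only [Function.comp, hval] at hij
      exact Fin.ext (by omega)
    · simp only [Function.comp, hval, Set.mem_Icc]
      omega
  have hE : Set.BijOn h Set.univ
      (Set.Icc (Fintype.card (Fin (n + l + 1)) + 1)
        (Fintype.card (Fin (n + l + 1)) + (starUnion n l).edgeSet.ncard)) := by
    rw [Fintype.card_fin, ncard_edgeSet, ← Set.image_univ_of_surjective spoke_bijective.2]
    exact (Set.bijOn_comp_iff spoke_bijective.1.injOn).mp hspoke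
  refine ⟨Sum.elim g h, isSuperEdgeMagic_iff.mpr ⟨hV, hE, fun u v huv => ?_⟩⟩
  have := (hE.mapsTo (Set.mem_univ ⟨s(u, v), (starUnion n l).mem_edgeSet.mpr huv⟩)).1
  change _ ≤ k - (g u + g v) at this
  change g u + g v + (k - (g u + g v)) = k
  omega

theorem exists_isSuperEdgeMagic_starUnion {n l k : ℕ} (hnl : n ≤ 2 * l + 1)
    (hk : k ∈ Set.Icc (2 * n + l + 4) (3 * n + 3 * l + 3)) :
    ∃ f, IsSuperEdgeMagic (starUnion n l) f k := by
  obtain ⟨hk₁, hk₂⟩ := hk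
  obtain ⟨c, m, rfl, hc, hcp, hm, hmp, hcm⟩ : ∃ c m, k = c + m + 2 * n + l + 1 ∧ 1 ≤ c ∧
      c ≤ n + l + 1 ∧ 1 ≤ m ∧ m + n ≤ n + l + 2 ∧ (c < m ∨ m + n ≤ c) := by
    by_cases h₁ : k ≤ 2 * n + 2 * l + 4
    · exact ⟨1, k - (2 * n + l + 2), by omega⟩
    by_cases h₂ : k ≤ 3 * n + l + 2
    · exact ⟨k - (2 * n + 2 * l + 3), l + 2, by omega⟩
    by_cases h₃ : k ≤ 3 * n + 2 * l + 3
    · exact ⟨k - (2 * n + l + 2), 1, by omega⟩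
    · exact ⟨n + l + 1, k - (3 * n + 2 * l + 2), by omega⟩
  exact exists_isSuperEdgeMagic_starUnion_of_center_leaves hc hcp hm hmp hcm

theorem stmt_16_general (n l : ℕ) (hn : 1 ≤ n) (hnl : n + 2 ≤ 2 * l + 3) :
    {k | ∃ f, IsSuperEdgeMagic (starUnion n l) f k} =
      Set.Icc (2 * n + l + 4) (3 * n + 3 * l + 3) :=
  Set.ext fun _ => ⟨fun ⟨_, hf⟩ => valence_mem_Icc_of_isSuperEdgeMagic_starUnion hn hf,
    exists_isSuperEdgeMagic_starUnion (by omega)⟩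

/-- Let `n` and `l` be positive integers with `2l + 3 ≥ n + 2`. Then the set
of valences of super edge-magic labelings of `K_{1,n} ∪ lK_1` is exactly the
set of integers `k` with `2n + l + 4 ≤ k ≤ 3n + 3l + 3`. -/
theorem stmt_16 (n l : ℕ) (hn : 1 ≤ n) (hl : 1 ≤ l) (hnl : n + 2 ≤ 2 * l + 3) :
    {k | ∃ f, IsSuperEdgeMagic (starUnion n l) f k} =
      Set.Icc (2 * n + l + 4) (3 * n + 3 * l + 3) :=
  stmt_16_general n l hn hnl
end

section
/- The graph C_3 ∪ K_1 (a triangle together with one isolated vertex, having 4 vertices and 3 edges) admits a super edge-magic labeling with valence 10 and a super edge-magic labeling with valence 12, but admits no super edge-magic labeling with valence 11. -/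
/-- The graph `C₃ ∪ K₁`: a triangle on the vertices `0, 1, 2` together with
the isolated vertex `3`. -/
def C3K1 : SimpleGraph (Fin 4) where
  Adj u v := u ≠ v ∧ u ≠ 3 ∧ v ≠ 3
  symm := ⟨fun u v ⟨h1, h2, h3⟩ => ⟨h1.symm, h3, h2⟩⟩
  loopless := ⟨fun v h => h.1 rfl⟩

theorem Set.bijOn_of_ncard_le {α β : Type*} {f : α → β} {s : Set α} {t : Set β}
    (hmaps : Set.MapsTo f s t) (hinj : Set.InjOn f s) (hcard : t.ncard ≤ s.ncard)
    (ht : t.Finite := by toFinite_tac) : Set.BijOn f s t := by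
  refine ⟨hmaps, hinj, ?_⟩
  rw [Set.SurjOn, Set.eq_of_subset_of_ncard_le hmaps.image_subset (by rwa [hinj.ncard_image]) ht]

section SuperEdgeMagic

variable {V : Type*} [Fintype V] {G : SimpleGraph V} {f : V ⊕ G.edgeSet → ℕ} {k : ℕ}

theorem IsSuperEdgeMagic.bijOn_vertex (hf : IsSuperEdgeMagic G f k) :
    Set.BijOn (f ∘ Sum.inl) Set.univ (Set.Icc 1 (Fintype.card V)) :=
  Set.bijOn_of_ncard_le (fun v _ => hf.2 v)
    (hf.1.1.injOn.comp Sum.inl_injective.injOn (Set.mapsTo_univ _ _))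
    (by simp [Set.ncard_univ])

theorem IsSuperEdgeMagic.edge_label_mem (hf : IsSuperEdgeMagic G f k) (e : G.edgeSet) :
    f (Sum.inr e) ∈ Set.Ioc (Fintype.card V) (Fintype.card V + G.edgeSet.ncard) := by
  obtain ⟨hpos, hle⟩ := hf.1.1.mapsTo (Set.mem_univ (Sum.inr e))
  refine ⟨lt_of_not_ge fun hlt => ?_, hle⟩
  obtain ⟨v, -, hv⟩ := hf.bijOn_vertex.surjOn ⟨hpos, hlt⟩
  exact Sum.inl_ne_inr (hf.1.1.injOn (Set.mem_univ _) (Set.mem_univ _) hv)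

end SuperEdgeMagic

def edgeSum {V : Type*} (g : V → ℕ) : Sym2 V → ℕ :=
  Sym2.lift ⟨fun u v => g u + g v, fun _ _ => add_comm _ _⟩

theorem exists_isSuperEdgeMagic_of_edgeSum {V : Type*} [Fintype V] (G : SimpleGraph V)
    {g : V → ℕ} {s : ℕ} (hg_inj : Function.Injective g)
    (hg_mem : ∀ v, g v ∈ Set.Icc 1 (Fintype.card V))
    (hsum_inj : Set.InjOn (edgeSum g) G.edgeSet)
    (hsum_mem : Set.MapsTo (edgeSum g) G.edgeSet (Set.Ico s (s + G.edgeSet.ncard))) :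
    ∃ f, IsSuperEdgeMagic G f (Fintype.card V + G.edgeSet.ncard + s) := by
  set p := Fintype.card V
  set q := G.edgeSet.ncard
  have hedge (e : G.edgeSet) :
      p < p + q + s - edgeSum g e ∧ p + q + s - edgeSum g e ≤ p + q := by
    have := hsum_mem e.2
    simp only [Set.mem_Ico] at this
    omega
  refine ⟨Sum.elim g fun e => p + q + s - edgeSum g e,
    ⟨Set.bijOn_of_ncard_le ?_ ?_ ?_, fun u v h => ?_⟩, hg_mem⟩
  · rintro (v | e) -
    · have := hg_mem v
      simp only [Set.mem_Icc, Sum.elim_inl] at this ⊢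
      omega
    · have := hedge e
      simp only [Set.mem_Icc, Sum.elim_inr]
      omega
  · rintro (u | e) - (v | e') - h
    · simp [hg_inj h]
    · have := hg_mem u; have := hedge e'
      simp only [Set.mem_Icc, Sum.elim_inl, Sum.elim_inr] at *
      omega
    · have := hg_mem v; have := hedge e
      simp only [Set.mem_Icc, Sum.elim_inl, Sum.elim_inr] at *
      omega
    · have := hedge e; have := hedge e'
      simp only [Sum.elim_inr] at h
      exact congrArg Sum.inr (Subtype.ext (hsum_inj e.2 e'.2 (by omega)))
  · simp [Set.ncard_univ, Nat.card_sum, Nat.card_coe_set_eq]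
  · have := hsum_mem (G.mem_edgeSet.mpr h)
    simp only [Set.mem_Ico, edgeSum, Sym2.lift_mk] at this
    simp only [Sum.elim_inl, Sum.elim_inr, edgeSum, Sym2.lift_mk]
    omega

instance : DecidableRel C3K1.Adj := fun u v =>
  inferInstanceAs (Decidable (u ≠ v ∧ u ≠ 3 ∧ v ≠ 3))

theorem C3K1_edgeSet : C3K1.edgeSet = {s(0, 1), s(0, 2), s(1, 2)} := by
  ext e
  revert e
  decide

theorem C3K1_ncard_edgeSet : C3K1.edgeSet.ncard = 3 := by
  rw [C3K1_edgeSet, Set.ncard_eq_three]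
  exact ⟨_, _, _, by decide, by decide, by decide, rfl⟩

theorem even_of_isSuperEdgeMagic_C3K1 {f : Fin 4 ⊕ C3K1.edgeSet → ℕ} {k : ℕ}
    (hf : IsSuperEdgeMagic C3K1 f k) : Even k := by
  have label (u v : Fin 4) (h : C3K1.Adj u v) := hf.edge_label_mem ⟨s(u, v), h⟩
  have l01 := label 0 1 (by decide)
  have l02 := label 0 2 (by decide)
  have l12 := label 1 2 (by decide)
  simp only [C3K1_ncard_edgeSet, Fintype.card_fin, Set.mem_Ioc] at l01 l02 l12
  have hne {e e' : C3K1.edgeSet} (h : e ≠ e') : f (Sum.inr e) ≠ f (Sum.inr e') :=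
    fun h' => h (Sum.inr_injective (hf.1.1.injOn trivial trivial h'))
  have d1 := hne (e := ⟨s(0, 1), by decide⟩) (e' := ⟨s(0, 2), by decide⟩) (by decide)
  have d2 := hne (e := ⟨s(0, 1), by decide⟩) (e' := ⟨s(1, 2), by decide⟩) (by decide)
  have d3 := hne (e := ⟨s(0, 2), by decide⟩) (e' := ⟨s(1, 2), by decide⟩) (by decide)
  have m01 := hf.1.2 0 1 (by decide)
  have m02 := hf.1.2 0 2 (by decide)
  have m12 := hf.1.2 1 2 (by decide)
  rw [Nat.even_iff]
  omega

/-- The graph `C₃ ∪ K₁` admits a super edge-magic labeling with valence `10`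
and one with valence `12`, but admits no super edge-magic labeling with
valence `11`. -/
theorem stmt_19 :
    (∃ f, IsSuperEdgeMagic C3K1 f 10) ∧ (∃ f, IsSuperEdgeMagic C3K1 f 12) ∧
    ¬ ∃ f, IsSuperEdgeMagic C3K1 f 11 := by
  refine ⟨?_, ?_, fun ⟨_, hf⟩ => absurd (even_of_isSuperEdgeMagic_C3K1 hf) (by decide)⟩
  · simpa [C3K1_ncard_edgeSet] using
      exists_isSuperEdgeMagic_of_edgeSum C3K1 (g := ![1, 2, 3, 4]) (s := 3) (by decide) (by decide)
      (by simp [C3K1_edgeSet, Set.InjOn, edgeSum]) (by simp [C3K1_edgeSet, Set.MapsTo, edgeSum])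
  · simpa [C3K1_ncard_edgeSet] using
      exists_isSuperEdgeMagic_of_edgeSum C3K1 (g := ![2, 3, 4, 1]) (s := 5) (by decide) (by decide)
      (by simp [C3K1_edgeSet, Set.InjOn, edgeSum]) (by simp [C3K1_edgeSet, Set.MapsTo, edgeSum])
end
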